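/- arXiv:2505.07268 — 2 statements merged into one kernel-verified Lean document; each statement's English description precedes it below -/
import Mathlib

section
/- Let G be a graph and U, U' ⊆ V(G) be vertex subsets with m(U) = m(U') that are adjacent under the component sliding rule CS (i.e., |C(U) \ C(U')| = |C(U') \ C(U)| = 1 and, writing C and C' for the unique components in C(U) \ C(U') and C(U') \ C(U) respectively, C ∪ C' induces a connected subgraph of G). Then there exists a sequence ⟨W_0 = U, W_1, …, W_ℓ = U'⟩ of vertex subsets of G such that every W_i has CC-multiset m(W_i) = m(U) and every two consecutive subsets W_i, W_{i+1} are adjacent under the rule CS1 (i.e., adjacent under CS and additionally the unique differing components C_i ∈ C(W_i) \ C(W_{i+1}) and C_{i+1} ∈ C(W_{i+1}) \ C(W_i) satisfy |C_i \ C_{i+1}| = |C_{i+1} \ C_i| = 1). In particular, reconfigurability under CS is equivalent to reconfigurability under CS1. -/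
open scoped Classical

noncomputable section

/-- `U` induces a connected subgraph of `G`. -/
def IsConnSub {V : Type*} (G : SimpleGraph V) (U : Finset V) : Prop :=
  (G.induce (U : Set V)).Connected

/-- The set of connected components of a vertex subset `U`:
maximal subsets of `U` inducing connected subgraphs. -/
def comps {V : Type*} [Fintype V] [DecidableEq V] (G : SimpleGraph V) (U : Finset V) :
    Finset (Finset V) :=
  Finset.univ.filter (fun C => C ⊆ U ∧ IsConnSub G C ∧
    ∀ D : Finset V, C ⊆ D → D ⊆ U → IsConnSub G D → D = C)

/-- The CC-multiset of `U`: the multiset of sizes of connected components of `U`. -/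
def ccMultiset {V : Type*} [Fintype V] [DecidableEq V] (G : SimpleGraph V) (U : Finset V) :
    Multiset ℕ :=
  (comps G U).val.map Finset.card

/-- Adjacency under component jumping (CJ). -/
def adjCJ {V : Type*} [Fintype V] [DecidableEq V] (G : SimpleGraph V) (U U' : Finset V) : Prop :=
  ccMultiset G U = ccMultiset G U' ∧
  (comps G U \ comps G U').card = 1 ∧ (comps G U' \ comps G U).card = 1

/-- Adjacency under component sliding (CS). -/
def adjCS {V : Type*} [Fintype V] [DecidableEq V] (G : SimpleGraph V) (U U' : Finset V) : Prop :=
  adjCJ G U U' ∧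
  ∀ C ∈ comps G U \ comps G U', ∀ C' ∈ comps G U' \ comps G U, IsConnSub G (C ∪ C')

/-- Adjacency under CS1 (component sliding by one vertex). -/
def adjCS1 {V : Type*} [Fintype V] [DecidableEq V] (G : SimpleGraph V) (U U' : Finset V) : Prop :=
  adjCS G U U' ∧
  ∀ C ∈ comps G U \ comps G U', ∀ C' ∈ comps G U' \ comps G U,
    (C \ C').card = 1 ∧ (C' \ C).card = 1

/-- Adjacency under token jumping (TJ). -/
def adjTJ {V : Type*} [DecidableEq V] (G : SimpleGraph V) (U U' : Finset V) : Prop :=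
  (U \ U').card = 1 ∧ (U' \ U).card = 1

/-- `A` and `B` are reconfigurable under rule `R` keeping the CC-multiset equal to `M`. -/
def Reconf {V : Type*} [Fintype V] [DecidableEq V] (G : SimpleGraph V) (M : Multiset ℕ)
    (R : Finset V → Finset V → Prop) (A B : Finset V) : Prop :=
  ∃ (ℓ : ℕ) (W : ℕ → Finset V), W 0 = A ∧ W ℓ = B ∧
    (∀ i ≤ ℓ, ccMultiset G (W i) = M) ∧ ∀ i < ℓ, R (W i) (W (i + 1))

end

/-!
Outside `C ∪ C'` the sets `U` and `U'` coincide, and this common rest is separated from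
`C ∪ C'`. Hence any sequence of connected sets inside the connected set `S = C ∪ C'` that leads
from `C` to `C'` by exchanging one vertex at a time, each exchange taking place inside a
connected set, becomes a CS1 sequence from `U` to `U'` after adding the rest.

Such a sequence exists for any two connected `k`-subsets `A`, `B` of a connected `S`, by
induction on `k`. For `k = 1` follow a walk. Otherwise delete non-cut vertices `a ∈ A`,
`b ∈ B` and link `A \ {a}` to `B \ {b}` by `k - 1`-sets `X₀, …, Xₘ`; then
`A, X₀ ∪ X₁, …, Xₘ₋₁ ∪ Xₘ, B` is the required sequence, since any two consecutive members
share a connected `k - 1`-set.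
-/

section IsConnSub

variable {V : Type*} {G : SimpleGraph V}

theorem IsConnSub.nonempty {X : Finset V} (h : IsConnSub G X) : X.Nonempty := by
  obtain ⟨⟨x, hx⟩⟩ := SimpleGraph.Connected.nonempty h
  exact ⟨x, hx⟩

theorem IsConnSub.exists_adj_of_mem_of_notMem {D X : Finset V} (hD : IsConnSub G D) {a b : V}
    (ha : a ∈ D) (haX : a ∈ X) (hb : b ∈ D) (hbX : b ∉ X) :
    ∃ x ∈ D, x ∈ X ∧ ∃ y ∈ D, y ∉ X ∧ G.Adj x y := by
  obtain ⟨p⟩ := hD.preconnected ⟨a, ha⟩ ⟨b, hb⟩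
  obtain ⟨d, -, hd₁, hd₂⟩ := p.exists_boundary_dart {x | x.1 ∈ X} haX hbX
  exact ⟨d.fst.1, d.fst.2, hd₁, d.snd.1, d.snd.2, hd₂, d.adj⟩

theorem isConnSub_singleton (v : V) : IsConnSub G {v} := by
  unfold IsConnSub
  rw [Finset.coe_singleton, SimpleGraph.induce_singleton_eq_top]
  exact SimpleGraph.connected_top

variable [DecidableEq V]

theorem isConnSub_pair {u v : V} (h : G.Adj u v) : IsConnSub G {u, v} := by
  unfold IsConnSub
  rw [Finset.coe_pair]
  exact SimpleGraph.induce_pair_connected_of_adj h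

theorem IsConnSub.union_of_mem {X Y : Finset V} (hX : IsConnSub G X) (hY : IsConnSub G Y)
    {a : V} (haX : a ∈ X) (haY : a ∈ Y) : IsConnSub G (X ∪ Y) := by
  unfold IsConnSub
  rw [Finset.coe_union]
  exact SimpleGraph.induce_union_connected hX.preconnected hY.preconnected ⟨a, haX, haY⟩

theorem IsConnSub.union_of_adj {X Y : Finset V} (hX : IsConnSub G X) (hY : IsConnSub G Y)
    {x y : V} (hx : x ∈ X) (hy : y ∈ Y) (hxy : G.Adj x y) : IsConnSub G (X ∪ Y) := by
  unfold IsConnSub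
  rw [Finset.coe_union]
  exact SimpleGraph.connected_induce_union hX.preconnected hY.preconnected hx hy hxy

theorem IsConnSub.insert_of_adj {X : Finset V} (hX : IsConnSub G X) {x v : V} (hx : x ∈ X)
    (hxv : G.Adj x v) : IsConnSub G (insert v X) := by
  have h := hX.union_of_adj (isConnSub_pair hxv) hx
    (Finset.mem_insert_of_mem (Finset.mem_singleton_self v)) hxv
  rwa [Finset.union_insert, Finset.union_singleton,
    Finset.insert_eq_of_mem (Finset.mem_insert_of_mem hx)] at h

theorem IsConnSub.exists_isConnSub_erase [Finite V] {X : Finset V} (hX : IsConnSub G X)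
    (hcard : 2 ≤ X.card) : ∃ u ∈ X, IsConnSub G (X.erase u) := by
  have : Nontrivial (X : Set V) := by
    rw [Set.nontrivial_coe_sort]
    exact Finset.one_lt_card_iff_nontrivial.1 hcard
  obtain ⟨⟨u, hu⟩, hconn⟩ :=
    SimpleGraph.Connected.exists_connected_induce_compl_singleton_of_finite_nontrivial hX
  refine ⟨u, hu, hconn.map ⟨fun w => ⟨w.1.1, ?_⟩, fun h => h⟩ ?_⟩
  · exact Finset.mem_erase.2 ⟨fun h => w.2 (Subtype.ext h), w.1.2⟩
  · rintro ⟨w, hw⟩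
    exact ⟨⟨⟨w, Finset.mem_of_mem_erase hw⟩,
      fun h => Finset.ne_of_mem_erase hw (congrArg Subtype.val h)⟩, rfl⟩

end IsConnSub

section Components

variable {V : Type*} [Fintype V] [DecidableEq V] {G : SimpleGraph V}

theorem mem_comps_iff_forall_not_adj {U C : Finset V} :
    C ∈ comps G U ↔ C ⊆ U ∧ IsConnSub G C ∧ ∀ x ∈ C, ∀ y ∈ U, y ∉ C → ¬G.Adj x y := by
  simp only [comps, Finset.mem_filter, Finset.mem_univ, true_and]
  refine and_congr_right fun hCU => and_congr_right fun hC => ⟨?_, ?_⟩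
  · intro hmax x hx y hy hyC hxy
    have := hmax _ (Finset.subset_insert y C) (Finset.insert_subset hy hCU)
      (hC.insert_of_adj hx hxy)
    exact hyC (this ▸ Finset.mem_insert_self y C)
  · intro hsep D hCD hDU hD
    refine (Finset.Subset.antisymm_iff.2 ⟨fun b hb => ?_, hCD⟩)
    by_contra hbC
    obtain ⟨a, ha⟩ := hC.nonempty
    obtain ⟨x, -, hx, y, hy, hyC, hxy⟩ := hD.exists_adj_of_mem_of_notMem (hCD ha) ha hb hbC
    exact hsep x hx y (hDU hy) hyC hxy

theorem IsConnSub.of_mem_comps {U C : Finset V} (h : C ∈ comps G U) : IsConnSub G C :=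
  (mem_comps_iff_forall_not_adj.1 h).2.1

theorem subset_of_mem_comps {U C : Finset V} (h : C ∈ comps G U) : C ⊆ U :=
  (mem_comps_iff_forall_not_adj.1 h).1

theorem eq_of_mem_comps_of_mem {U P Q : Finset V} (hP : P ∈ comps G U) (hQ : Q ∈ comps G U)
    {a : V} (haP : a ∈ P) (haQ : a ∈ Q) : P = Q := by
  have hmax : ∀ C ∈ comps G U, C ⊆ P ∪ Q → P ∪ Q = C := fun C hC hCPQ =>
    ((Finset.mem_filter.1 hC).2.2.2 (P ∪ Q) hCPQ
      (Finset.union_subset (subset_of_mem_comps hP) (subset_of_mem_comps hQ))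
      ((IsConnSub.of_mem_comps hP).union_of_mem (IsConnSub.of_mem_comps hQ) haP haQ))
  exact (hmax P hP Finset.subset_union_left).symm.trans (hmax Q hQ Finset.subset_union_right)

theorem exists_mem_comps {U : Finset V} {a : V} (ha : a ∈ U) : ∃ P ∈ comps G U, a ∈ P := by
  obtain ⟨P, hP, hmax⟩ := Finset.exists_max_image
    (U.powerset.filter fun D => a ∈ D ∧ IsConnSub G D) Finset.card
    ⟨{a}, by simpa [ha] using isConnSub_singleton (G := G) a⟩
  simp only [Finset.mem_filter, Finset.mem_powerset] at hP hmax
  refine ⟨P, Finset.mem_filter.2 ⟨Finset.mem_univ P, hP.1, hP.2.2, fun D hPD hDU hD => ?_⟩, hP.2.1⟩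
  exact (Finset.eq_of_subset_of_card_le hPD (hmax D ⟨hDU, hPD hP.2.1, hD⟩)).symm

theorem comps_union_of_separated {R D : Finset V} (hD : IsConnSub G D)
    (hsep : ∀ x ∈ R, ∀ y ∈ D, ¬G.Adj x y) : comps G (R ∪ D) = insert D (comps G R) := by
  have hDmem : D ∈ comps G (R ∪ D) := by
    refine mem_comps_iff_forall_not_adj.2 ⟨Finset.subset_union_right, hD, ?_⟩
    intro x hx y hy hyD hxy
    exact hsep y ((Finset.mem_union.1 hy).resolve_right hyD) x hx hxy.symm
  have hRmem : ∀ P ∈ comps G R, P ∈ comps G (R ∪ D) := by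
    intro P hP
    obtain ⟨hPR, hPc, hPsep⟩ := mem_comps_iff_forall_not_adj.1 hP
    refine mem_comps_iff_forall_not_adj.2 ⟨hPR.trans Finset.subset_union_left, hPc, ?_⟩
    intro x hx y hy hyP hxy
    rcases Finset.mem_union.1 hy with hy | hy
    · exact hPsep x hx y hy hyP hxy
    · exact hsep x (hPR hx) y hy hxy
  ext P
  rw [Finset.mem_insert]
  refine ⟨fun hP => ?_, ?_⟩
  · obtain ⟨a, ha⟩ := (IsConnSub.of_mem_comps hP).nonempty
    rcases Finset.mem_union.1 (subset_of_mem_comps hP ha) with haR | haD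
    · obtain ⟨Q, hQ, haQ⟩ := exists_mem_comps haR
      exact Or.inr (eq_of_mem_comps_of_mem hP (hRmem Q hQ) ha haQ ▸ hQ)
    · exact Or.inl (eq_of_mem_comps_of_mem hP hDmem ha haD)
  · rintro (rfl | hP)
    · exact hDmem
    · exact hRmem P hP

theorem notMem_comps_of_disjoint {R D : Finset V} (hD : D.Nonempty) (hRD : Disjoint R D) :
    D ∉ comps G R := fun h => by
  obtain ⟨a, ha⟩ := hD
  exact Finset.disjoint_left.1 hRD (subset_of_mem_comps h ha) ha

theorem not_adj_of_mem_comps {U C : Finset V} (hC : C ∈ comps G U) :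
    ∀ x ∈ U \ C, ∀ y ∈ C, ¬G.Adj x y := fun x hx y hy hxy =>
  (mem_comps_iff_forall_not_adj.1 hC).2.2 y hy x (Finset.mem_sdiff.1 hx).1
    (Finset.mem_sdiff.1 hx).2 hxy.symm

theorem ccMultiset_union_of_separated {R D : Finset V} (hD : IsConnSub G D)
    (hRD : Disjoint R D) (hsep : ∀ x ∈ R, ∀ y ∈ D, ¬G.Adj x y) :
    ccMultiset G (R ∪ D) = D.card ::ₘ ccMultiset G R := by
  rw [ccMultiset, comps_union_of_separated hD hsep,
    Finset.insert_val_of_notMem (notMem_comps_of_disjoint hD.nonempty hRD), Multiset.map_cons]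
  rfl

theorem sdiff_subset_sdiff_of_comps_sdiff_subset {U U' C C' : Finset V}
    (hC' : C' ∈ comps G U') (hC'U : C' ∉ comps G U) (h : comps G U \ comps G U' ⊆ {C}) :
    U \ C ⊆ U' \ C' := by
  intro a ha
  obtain ⟨haU, haC⟩ := Finset.mem_sdiff.1 ha
  obtain ⟨P, hP, haP⟩ := exists_mem_comps (G := G) haU
  have hPU' : P ∈ comps G U' := by
    by_contra hPU'
    have := h (Finset.mem_sdiff.2 ⟨hP, hPU'⟩)
    exact haC (Finset.mem_singleton.1 this ▸ haP)
  refine Finset.mem_sdiff.2 ⟨subset_of_mem_comps hPU' haP, fun haC' => hC'U ?_⟩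
  exact eq_of_mem_comps_of_mem hPU' hC' haP haC' ▸ hP

end Components

section Slide

variable {V : Type*} [DecidableEq V] {G : SimpleGraph V} {S : Finset V}

structure Slide (G : SimpleGraph V) (S X Y : Finset V) : Prop where
  subset_left : X ⊆ S
  subset_right : Y ⊆ S
  isConnSub_left : IsConnSub G X
  isConnSub_right : IsConnSub G Y
  isConnSub_union : IsConnSub G (X ∪ Y)
  card_sdiff_left : (X \ Y).card = 1
  card_sdiff_right : (Y \ X).card = 1

theorem Slide.card_eq {X Y : Finset V} (h : Slide G S X Y) : X.card = Y.card :=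
  Finset.card_sdiff_eq_card_sdiff_iff.1 (h.card_sdiff_left.trans h.card_sdiff_right.symm)

theorem Slide.card_union {X Y : Finset V} (h : Slide G S X Y) : (X ∪ Y).card = X.card + 1 := by
  rw [Finset.union_comm, ← Finset.card_sdiff_add_card, h.card_sdiff_right, add_comm]

theorem slide_reflTransGen_of_card_sdiff_le_one {X Y : Finset V} (hXS : X ⊆ S) (hYS : Y ⊆ S)
    (hX : IsConnSub G X) (hY : IsConnSub G Y) (hXY : IsConnSub G (X ∪ Y))
    (hcard : X.card = Y.card) (hsdiff : (X \ Y).card ≤ 1) :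
    Relation.ReflTransGen (Slide G S) X Y := by
  have hcomm := Finset.card_sdiff_eq_card_sdiff_iff.2 hcard
  rcases Nat.le_one_iff_eq_zero_or_eq_one.1 hsdiff with h0 | h1
  · rw [Finset.card_eq_zero, Finset.sdiff_eq_empty_iff_subset] at h0
    rw [Finset.eq_of_subset_of_card_le h0 hcard.ge]
  · exact .single ⟨hXS, hYS, hX, hY, hXY, h1, hcomm ▸ h1⟩

theorem slide_reflTransGen_of_subset {X Z₁ Z₂ : Finset V} (hX : X.Nonempty)
    (hXZ₁ : X ⊆ Z₁) (hXZ₂ : X ⊆ Z₂) (hZ₁S : Z₁ ⊆ S) (hZ₂S : Z₂ ⊆ S)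
    (hZ₁ : IsConnSub G Z₁) (hZ₂ : IsConnSub G Z₂)
    (hcard₁ : Z₁.card = X.card + 1) (hcard₂ : Z₂.card = X.card + 1) :
    Relation.ReflTransGen (Slide G S) Z₁ Z₂ := by
  obtain ⟨a, ha⟩ := hX
  refine slide_reflTransGen_of_card_sdiff_le_one hZ₁S hZ₂S hZ₁ hZ₂
    (hZ₁.union_of_mem hZ₂ (hXZ₁ ha) (hXZ₂ ha)) (hcard₁.trans hcard₂.symm) ?_
  calc (Z₁ \ Z₂).card ≤ (Z₁ \ X).card := Finset.card_le_card (Finset.sdiff_subset_sdiff le_rfl hXZ₂)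
    _ = 1 := by rw [Finset.card_sdiff_of_subset hXZ₁]; omega

theorem Relation.ReflTransGen.slide_lift {X Y : Finset V}
    (hXY : Relation.ReflTransGen (Slide G S) X Y) (hX : X.Nonempty)
    {Z Z' : Finset V} (hXZ : X ⊆ Z) (hZS : Z ⊆ S) (hZ : IsConnSub G Z)
    (hcardZ : Z.card = X.card + 1) (hYZ' : Y ⊆ Z') (hZ'S : Z' ⊆ S) (hZ' : IsConnSub G Z')
    (hcardZ' : Z'.card = Y.card + 1) :
    Relation.ReflTransGen (Slide G S) Z Z' := by
  induction hXY generalizing Z' with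
  | refl => exact slide_reflTransGen_of_subset hX hXZ hYZ' hZS hZ'S hZ hZ' hcardZ hcardZ'
  | @tail Y₁ Y₂ _ hstep ih =>
    have hUS := Finset.union_subset hstep.subset_left hstep.subset_right
    refine (ih Finset.subset_union_left hUS hstep.isConnSub_union hstep.card_union).trans ?_
    exact slide_reflTransGen_of_subset hstep.isConnSub_right.nonempty Finset.subset_union_right
      hYZ' hUS hZ'S hstep.isConnSub_union hZ' (by rw [hstep.card_union, hstep.card_eq]) hcardZ'

theorem slide_reflTransGen_singleton (hS : IsConnSub G S) {a b : V} (ha : a ∈ S) (hb : b ∈ S) :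
    Relation.ReflTransGen (Slide G S) {a} {b} := by
  by_contra hab
  set X := S.filter fun x => Relation.ReflTransGen (Slide G S) {a} {x}
  obtain ⟨x, -, hxX, y, hyS, hyX, hxy⟩ :=
    hS.exists_adj_of_mem_of_notMem (X := X) ha (Finset.mem_filter.2 ⟨ha, .refl⟩) hb
      fun h => hab (Finset.mem_filter.1 h).2
  obtain ⟨hxS, hax⟩ := Finset.mem_filter.1 hxX
  have hxy' : Relation.ReflTransGen (Slide G S) {x} {y} := by
    refine slide_reflTransGen_of_card_sdiff_le_one (Finset.singleton_subset_iff.2 hxS)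
      (Finset.singleton_subset_iff.2 hyS) (isConnSub_singleton x) (isConnSub_singleton y) ?_ rfl
      ((Finset.card_le_card Finset.sdiff_subset).trans (Finset.card_singleton x).le)
    rw [Finset.singleton_union]
    exact isConnSub_pair hxy
  exact hyX (Finset.mem_filter.2 ⟨hyS, hax.trans hxy'⟩)

theorem IsConnSub.slide_reflTransGen [Finite V] (hS : IsConnSub G S) {A B : Finset V}
    (hAS : A ⊆ S) (hBS : B ⊆ S) (hA : IsConnSub G A) (hB : IsConnSub G B)
    (hcard : A.card = B.card) : Relation.ReflTransGen (Slide G S) A B := by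
  obtain ⟨k, hk⟩ : ∃ k, A.card = k := ⟨_, rfl⟩
  induction k generalizing A B with
  | zero => exact absurd hk hA.nonempty.card_pos.ne'
  | succ k ih =>
    rcases Nat.eq_zero_or_pos k with rfl | hkpos
    · obtain ⟨a, rfl⟩ := Finset.card_eq_one.1 hk
      obtain ⟨b, rfl⟩ := Finset.card_eq_one.1 (hcard ▸ hk)
      exact slide_reflTransGen_singleton hS (hAS (Finset.mem_singleton_self a))
        (hBS (Finset.mem_singleton_self b))
    obtain ⟨a, ha, hA'⟩ := hA.exists_isConnSub_erase (by omega)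
    obtain ⟨b, hb, hB'⟩ := hB.exists_isConnSub_erase (by omega)
    have hcardA := Finset.card_erase_of_mem ha
    have hcardB := Finset.card_erase_of_mem hb
    refine (ih ((A.erase_subset a).trans hAS) ((B.erase_subset b).trans hBS) hA' hB'
      (by omega) (by omega)).slide_lift hA'.nonempty (A.erase_subset a) hAS hA (by omega)
      (B.erase_subset b) hBS hB (by omega)

end Slide

section Reconfiguration

variable {V : Type*} [Fintype V] [DecidableEq V] {G : SimpleGraph V}

theorem reconf_iff_reflTransGen {M : Multiset ℕ} {R : Finset V → Finset V → Prop}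
    (hR : ∀ X Y, R X Y → ccMultiset G X = ccMultiset G Y) {A B : Finset V} :
    Reconf G M R A B ↔ ccMultiset G A = M ∧ Relation.ReflTransGen R A B := by
  constructor
  · rintro ⟨ℓ, W, rfl, rfl, hcc, hstep⟩
    refine ⟨hcc 0 ℓ.zero_le, ?_⟩
    suffices ∀ i ≤ ℓ, Relation.ReflTransGen R (W 0) (W i) from this ℓ le_rfl
    intro i hi
    induction i with
    | zero => exact .refl
    | succ i ih => exact (ih (by omega)).tail (hstep i (by omega))
  · rintro ⟨hA, hAB⟩
    induction hAB with
    | refl => exact ⟨0, fun _ => A, rfl, rfl, fun _ _ => hA, fun i hi => absurd hi i.not_lt_zero⟩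
    | @tail b c _ hbc ih =>
      obtain ⟨ℓ, W, h0, rfl, hcc, hstep⟩ := ih
      refine ⟨ℓ + 1, Function.update W (ℓ + 1) c, ?_, by simp, fun i hi => ?_, fun i hi => ?_⟩
      · simpa using h0
      · rcases hi.lt_or_eq with hi | rfl
        · rw [Function.update_of_ne (by omega)]
          exact hcc i (by omega)
        · rw [Function.update_self, ← hR _ _ hbc]
          exact hcc ℓ le_rfl
      · rcases (Nat.lt_succ_iff.1 hi).lt_or_eq with hi | rfl
        · rw [Function.update_of_ne (by omega), Function.update_of_ne (by omega)]
          exact hstep i hi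
        · rw [Function.update_of_ne (by omega), Function.update_self]
          exact hbc

theorem adjCS1_union_of_slide {R S X Y : Finset V} (hRS : Disjoint R S)
    (hsep : ∀ x ∈ R, ∀ y ∈ S, ¬G.Adj x y) (h : Slide G S X Y) :
    adjCS1 G (R ∪ X) (R ∪ Y) := by
  have hsepX : ∀ x ∈ R, ∀ y ∈ X, ¬G.Adj x y := fun x hx y hy => hsep x hx y (h.subset_left hy)
  have hsepY : ∀ x ∈ R, ∀ y ∈ Y, ¬G.Adj x y := fun x hx y hy => hsep x hx y (h.subset_right hy)
  have hX := h.isConnSub_left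
  have hY := h.isConnSub_right
  have hXR := notMem_comps_of_disjoint (G := G) hX.nonempty (hRS.mono_right h.subset_left)
  have hYR := notMem_comps_of_disjoint (G := G) hY.nonempty (hRS.mono_right h.subset_right)
  have hXY : X ≠ Y := fun e => by simpa [e] using h.card_sdiff_left
  have hdiff : comps G (R ∪ X) \ comps G (R ∪ Y) = {X} := by
    rw [comps_union_of_separated hX hsepX, comps_union_of_separated hY hsepY,
      Finset.insert_sdiff_of_notMem _ (by simp [hXY, hXR]),
      Finset.sdiff_eq_empty_iff_subset.2 (Finset.subset_insert _ _)]
    rfl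
  have hdiff' : comps G (R ∪ Y) \ comps G (R ∪ X) = {Y} := by
    rw [comps_union_of_separated hX hsepX, comps_union_of_separated hY hsepY,
      Finset.insert_sdiff_of_notMem _ (by simp [hXY.symm, hYR]),
      Finset.sdiff_eq_empty_iff_subset.2 (Finset.subset_insert _ _)]
    rfl
  refine ⟨⟨⟨?_, by simp [hdiff], by simp [hdiff']⟩, ?_⟩, ?_⟩
  · rw [ccMultiset_union_of_separated hX (hRS.mono_right h.subset_left) hsepX,
      ccMultiset_union_of_separated hY (hRS.mono_right h.subset_right) hsepY, h.card_eq]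
  · simp only [hdiff, hdiff', Finset.mem_singleton]
    rintro _ rfl _ rfl
    exact h.isConnSub_union
  · simp only [hdiff, hdiff', Finset.mem_singleton]
    rintro _ rfl _ rfl
    exact ⟨h.card_sdiff_left, h.card_sdiff_right⟩

theorem adjCS.reflTransGen_adjCS1 {U U' : Finset V} (h : adjCS G U U') :
    Relation.ReflTransGen (adjCS1 G) U U' := by
  obtain ⟨⟨hcc, hcard, hcard'⟩, hconn⟩ := h
  obtain ⟨C, hCdiff⟩ := Finset.card_eq_one.1 hcard
  obtain ⟨C', hC'diff⟩ := Finset.card_eq_one.1 hcard'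
  have hCdiffmem : C ∈ comps G U \ comps G U' := hCdiff ▸ Finset.mem_singleton_self C
  have hC'diffmem : C' ∈ comps G U' \ comps G U := hC'diff ▸ Finset.mem_singleton_self C'
  obtain ⟨hCmem, hCnotmem⟩ := Finset.mem_sdiff.1 hCdiffmem
  obtain ⟨hC'mem, hC'notmem⟩ := Finset.mem_sdiff.1 hC'diffmem
  have hC := IsConnSub.of_mem_comps hCmem
  have hC' := IsConnSub.of_mem_comps hC'mem
  set R := U \ C
  have hR : R = U' \ C' :=
    (sdiff_subset_sdiff_of_comps_sdiff_subset hC'mem hC'notmem hCdiff.subset).antisymm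
      (sdiff_subset_sdiff_of_comps_sdiff_subset hCmem hCnotmem hC'diff.subset)
  have hU : R ∪ C = U := Finset.sdiff_union_of_subset (subset_of_mem_comps hCmem)
  have hU' : R ∪ C' = U' := hR ▸ Finset.sdiff_union_of_subset (subset_of_mem_comps hC'mem)
  have hdisjC : Disjoint R C := Finset.sdiff_disjoint
  have hdisjC' : Disjoint R C' := hR ▸ Finset.sdiff_disjoint
  have hsepC : ∀ x ∈ R, ∀ y ∈ C, ¬G.Adj x y := not_adj_of_mem_comps hCmem
  have hsepC' : ∀ x ∈ R, ∀ y ∈ C', ¬G.Adj x y := by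
    rw [hR]
    exact not_adj_of_mem_comps hC'mem
  have hcardC : C.card = C'.card := by
    rw [← hU, ← hU', ccMultiset_union_of_separated hC hdisjC hsepC,
      ccMultiset_union_of_separated hC' hdisjC' hsepC'] at hcc
    exact (Multiset.cons_inj_left _).1 hcc
  have hslide : Relation.ReflTransGen (Slide G (C ∪ C')) C C' :=
    (hconn C hCdiffmem C' hC'diffmem).slide_reflTransGen Finset.subset_union_left
      Finset.subset_union_right hC hC' hcardC
  have hsep : ∀ x ∈ R, ∀ y ∈ C ∪ C', ¬G.Adj x y := fun x hx y hy =>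
    (Finset.mem_union.1 hy).elim (hsepC x hx y) (hsepC' x hx y)
  rw [← hU, ← hU']
  exact hslide.lift (R ∪ ·) fun X Y hXY =>
    adjCS1_union_of_slide (Finset.disjoint_union_right.2 ⟨hdisjC, hdisjC'⟩) hsep hXY

end Reconfiguration

/-- A single CS move can be simulated by a sequence of CS1 moves keeping
the CC-multiset; in particular reconfigurability under CS and CS1 coincide. -/
theorem stmt0 {V : Type*} [Fintype V] [DecidableEq V] (G : SimpleGraph V)
    (U U' : Finset V) (h : adjCS G U U') :
    Reconf G (ccMultiset G U) (adjCS1 G) U U' ∧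
    (∀ (M : Multiset ℕ) (A B : Finset V),
      Reconf G M (adjCS G) A B ↔ Reconf G M (adjCS1 G) A B) := by
  have hCS : ∀ X Y, adjCS G X Y → ccMultiset G X = ccMultiset G Y := fun _ _ h => h.1.1
  have hCS1 : ∀ X Y, adjCS1 G X Y → ccMultiset G X = ccMultiset G Y := fun _ _ h => h.1.1.1
  refine ⟨(reconf_iff_reflTransGen hCS1).2 ⟨rfl, h.reflTransGen_adjCS1⟩, fun M A B => ?_⟩
  rw [reconf_iff_reflTransGen hCS, reconf_iff_reflTransGen hCS1]
  refine and_congr_right fun _ => ⟨?_, ?_⟩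
  · exact Relation.reflTransGen_closed (fun X Y (hXY : adjCS G X Y) => hXY.reflTransGen_adjCS1) A B
  · exact Relation.ReflTransGen.mono (fun X Y (hXY : adjCS1 G X Y) => hXY.1) A B
end

section
/- Let G be a connected cograph (connected P4-free graph) and let X, Y ⊆ V(G) be nonempty connected vertex subsets such that X does not touch Y (i.e., X ∪ Y does not induce a connected subgraph; in particular X ∩ Y = ∅ and no edge joins X and Y). Then there exists a vertex z ∈ V(G) \ (X ∪ Y) that has a neighbor in X and a neighbor in Y. -/
open scoped Classical

/-- `G` is P4-free (a cograph): it contains no induced path on four vertices. -/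
def P4Free {V : Type*} (G : SimpleGraph V) : Prop :=
  ¬ ∃ a b c d : V, a ≠ b ∧ a ≠ c ∧ a ≠ d ∧ b ≠ c ∧ b ≠ d ∧ c ≠ d ∧
    G.Adj a b ∧ G.Adj b c ∧ G.Adj c d ∧ ¬ G.Adj a c ∧ ¬ G.Adj a d ∧ ¬ G.Adj b d

/-- `X` touches `Y`: `X ∪ Y` induces a connected subgraph. -/
def Touches {V : Type*} [DecidableEq V] (G : SimpleGraph V) (X Y : Finset V) : Prop :=
  IsConnSub G (X ∪ Y)

/-- Adjacency under CS between two single connected vertex subsets of equal size: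
they differ and their union induces a connected subgraph. -/
def adjCSconn {V : Type*} [DecidableEq V] (G : SimpleGraph V) (U U' : Finset V) : Prop :=
  U ≠ U' ∧ IsConnSub G (U ∪ U')

/-- Adjacency under CS1 between two single connected vertex subsets of equal size:
CS-adjacent and they exchange exactly one vertex. -/
def adjCS1conn {V : Type*} [DecidableEq V] (G : SimpleGraph V) (U U' : Finset V) : Prop :=
  adjCSconn G U U' ∧ (U \ U').card = 1 ∧ (U' \ U).card = 1

/-- The set of lengths of reconfiguration sequences of connected vertex subsets of size
`|X|` from `X` to `Y` with consecutive subsets adjacent under `R`; its infimum is the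
shortest distance `d_R(X, Y)`. -/
def connSeqLengths {V : Type*} (G : SimpleGraph V) (R : Finset V → Finset V → Prop)
    (X Y : Finset V) : Set ℕ :=
  {ℓ | ∃ W : ℕ → Finset V, W 0 = X ∧ W ℓ = Y ∧
    (∀ i ≤ ℓ, IsConnSub G (W i) ∧ (W i).card = X.card) ∧
    ∀ i < ℓ, R (W i) (W (i + 1))}

/-! Connected cographs have diameter at most two: walking back along a walk to `v`, the first
vertex at distance three from `v` would start an induced `P4`. So any `x ∈ X` and `y ∈ Y`,
which are distinct and nonadjacent because `X` and `Y` do not touch, have a common neighbour,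
and for the same reason it lies in neither set. -/

section

variable {V : Type*} {G : SimpleGraph V}

theorem P4Free.exists_adj_adj_of_reachable (hP4 : P4Free G) {u v : V} (hr : G.Reachable u v)
    (huv : u ≠ v) (hnadj : ¬ G.Adj u v) : ∃ w, G.Adj u w ∧ G.Adj w v := by
  obtain ⟨p⟩ := hr
  induction p with
  | nil => exact absurd rfl huv
  | @cons u u' v hu q ih =>
    by_cases hu'v : u' = v
    · exact absurd (hu'v ▸ hu) hnadj
    by_cases hadj : G.Adj u' v
    · exact ⟨u', hu, hadj⟩
    obtain ⟨c, hu'c, hcv⟩ := ih hu'v hadj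
    by_cases huc : G.Adj u c
    · exact ⟨c, huc, hcv⟩
    have hcu : u ≠ c := by rintro rfl; exact hnadj hcv
    exact (hP4 ⟨u, u', c, v, hu.ne, hcu, huv, hu'c.ne, hu'v, hcv.ne,
      hu, hu'c, hcv, huc, hnadj, hadj⟩).elim

section Touches

variable [DecidableEq V] {X Y : Finset V}

theorem IsConnSub.touches_of_mem_of_mem (hX : IsConnSub G X) (hY : IsConnSub G Y) {x : V}
    (hxX : x ∈ X) (hxY : x ∈ Y) : Touches G X Y := by
  unfold Touches IsConnSub
  rw [Finset.coe_union]
  exact SimpleGraph.induce_union_connected hX.preconnected hY.preconnected ⟨x, hxX, hxY⟩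

theorem IsConnSub.touches_of_adj (hX : IsConnSub G X) (hY : IsConnSub G Y) {x y : V}
    (hx : x ∈ X) (hy : y ∈ Y) (hxy : G.Adj x y) : Touches G X Y := by
  unfold Touches IsConnSub
  rw [Finset.coe_union]
  exact SimpleGraph.connected_induce_union hX.preconnected hY.preconnected hx hy hxy

end Touches

end

theorem stmt9_general {V : Type*} [DecidableEq V] (G : SimpleGraph V)
    (hconn : G.Connected) (hP4 : P4Free G) (X Y : Finset V)
    (hXne : X.Nonempty) (hYne : Y.Nonempty)
    (hX : IsConnSub G X) (hY : IsConnSub G Y)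
    (hnt : ¬ Touches G X Y) :
    ∃ z : V, z ∉ X ∪ Y ∧ (∃ x ∈ X, G.Adj z x) ∧ (∃ y ∈ Y, G.Adj z y) := by
  obtain ⟨x, hx⟩ := hXne
  obtain ⟨y, hy⟩ := hYne
  have hxy : x ≠ y := by
    rintro rfl
    exact hnt (hX.touches_of_mem_of_mem hY hx hy)
  obtain ⟨z, hxz, hzy⟩ := hP4.exists_adj_adj_of_reachable (hconn.preconnected x y) hxy
    (fun h ↦ hnt (hX.touches_of_adj hY hx hy h))
  have hzX : z ∉ X := fun hz ↦ hnt (hX.touches_of_adj hY hz hy hzy)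
  have hzY : z ∉ Y := fun hz ↦ hnt (hX.touches_of_adj hY hx hz hxz)
  exact ⟨z, by simp [hzX, hzY], ⟨x, hx, hxz.symm⟩, ⟨y, hy, hzy⟩⟩

/-- In a connected cograph, if nonempty connected subsets `X` and `Y`
do not touch, then some vertex outside `X ∪ Y` has a neighbor in `X` and a neighbor
in `Y`. -/
theorem stmt9 {V : Type*} [Fintype V] [DecidableEq V] (G : SimpleGraph V)
    (hconn : G.Connected) (hP4 : P4Free G) (X Y : Finset V)
    (hXne : X.Nonempty) (hYne : Y.Nonempty)
    (hX : IsConnSub G X) (hY : IsConnSub G Y)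
    (hnt : ¬ Touches G X Y) :
    ∃ z : V, z ∉ X ∪ Y ∧ (∃ x ∈ X, G.Adj z x) ∧ (∃ y ∈ Y, G.Adj z y) :=
  stmt9_general G hconn hP4 X Y hXne hYne hX hY hnt
end
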